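/- Let κ > 0, K_* > 0, T_* > 0 and let V : ℝ → ℝ be smooth with V(0) = V'(0) = 0 and V''(0) =: k > 0. Then there exist ρ_* = ρ_*(V) > 0, μ_* = μ_*(K_*,T_*,κ,V) > 0 and C_* = C_*(K_*,T_*,κ,V) > 0 such that for all μ ∈ (0,μ_*]: if (R̃,P̃) solves the FPUT system Ṙ̃ = δ⁺P̃, Ṗ̃ = δ⁻[V'(R̃)] with ‖R̃(0)‖ + ‖P̃(0)‖ ≤ ρ_*, and (r̃,p̃) solves the driven harmonic oscillator system ṙ̃ = p̃ − P̃, μṗ̃ = −κr̃ with initial data satisfying ‖r̃(0)‖ + √μ ‖p̃(0) − P̃(0)‖ ≤ K_*μ, and (R,P,r,p) solves the MiM lattice with ‖(R(0),P(0),r(0),p(0)) − (R̃(0),P̃(0),r̃(0),p̃(0))‖_μ ≤ μ, then ‖(R(t),P(t),r(t),p(t)) − (R̃(t),P̃(t),r̃(t),p̃(t))‖_μ ≤ C_*μ for all t ∈ [−T_*,T_*]. -/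

import Mathlib

/-!
Write `S, Q, s, q` for the differences `R − R̃, P − P̃, r − r̃, p − p̃`. The energy of the
oscillators only gives `r̃ = O(√μ)`, so the forcing term `κ⟨r̃, Q⟩` in the derivative of
`‖(S, Q, s, q)‖²_μ` would cost a factor `√μ`. Since `κ r̃ = −μ ṗ̃`, it is absorbed by passing to the
modified energy `G = ‖(S, Q + μ p̃, s, q)‖²_μ`, for which all oscillator terms cancel:
`Ġ = k⟨S, δ⁺Q⟩ + ⟨Q + μ p̃, δ⁻[V'(R) − V'(R̃)]⟩ + κμ⟨s, p̃⟩`.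
While `R` and `R̃` stay in `[−1, 1]`, where `V'` is Lipschitz, this gives `|Ġ| ≤ K G + ε μ²`, and a
Grönwall bootstrap yields `G = O(μ²)` on `[−T, T]`; for `μ` small this in turn keeps `R` in
`[−1, 1]`. The a priori bounds `‖R̃‖, ‖P̃‖ ≤ 1/2` and `‖p̃‖ = O(1)` come from the same bootstrap
applied to the FPUT energy and to `κ/2 ‖r̃‖² + μ/2 ‖p̃ − P̃‖²`.
-/

noncomputable section

/-- ℓ²(ℤ;ℝ). -/
abbrev L2Z : Type := lp (fun _ : ℤ => ℝ) 2

/-- `(R,P,r,p)` is a (C¹) global-in-time solution of the first-order mass-in-mass lattice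
`Ṙ = δ⁺P`, `Ṗ = δ⁻[V'(R)] + κ r`, `ṙ = p − P`, `μ ṗ = −κ r`. -/
def IsMiMSolution (V : ℝ → ℝ) (κ μ : ℝ) (R P r p : ℝ → L2Z) : Prop :=
  ∀ t : ℝ, ∃ R' P' r' p' : L2Z,
    HasDerivAt R R' t ∧ HasDerivAt P P' t ∧
    HasDerivAt r r' t ∧ HasDerivAt p p' t ∧
    (∀ j : ℤ, R' j = P t (j + 1) - P t j) ∧
    (∀ j : ℤ, P' j = (deriv V (R t j) - deriv V (R t (j - 1))) + κ * r t j) ∧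
    (∀ j : ℤ, r' j = p t j - P t j) ∧
    (∀ j : ℤ, μ * p' j = -(κ * r t j))

/-- `(R,P)` is a (C¹) global-in-time solution of the monatomic FPUT lattice
`Ṙ = δ⁺P`, `Ṗ = δ⁻[V'(R)]`. -/
def IsFPUTSolution (V : ℝ → ℝ) (R P : ℝ → L2Z) : Prop :=
  ∀ t : ℝ, ∃ R' P' : L2Z,
    HasDerivAt R R' t ∧ HasDerivAt P P' t ∧
    (∀ j : ℤ, R' j = P t (j + 1) - P t j) ∧
    (∀ j : ℤ, P' j = deriv V (R t j) - deriv V (R t (j - 1)))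

/-- `(r,p)` is a (C¹) global-in-time solution of the driven harmonic oscillator system
`ṙ = p − P`, `μ ṗ = −κ r` (driven by a given `P`). -/
def IsDrivenSHOSolution (κ μ : ℝ) (P r p : ℝ → L2Z) : Prop :=
  ∀ t : ℝ, ∃ r' p' : L2Z,
    HasDerivAt r r' t ∧ HasDerivAt p p' t ∧
    (∀ j : ℤ, r' j = p t j - P t j) ∧
    (∀ j : ℤ, μ * p' j = -(κ * r t j))

/-- The norm `‖(R,P,r,p)‖_μ = sqrt( (k/2)‖R‖² + (1/2)‖P‖² + (κ/2)‖r‖² + (μ/2)‖p‖² )`. -/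
def munorm (k κ μ : ℝ) (R P r p : L2Z) : ℝ :=
  Real.sqrt (k / 2 * ‖R‖ ^ 2 + 1 / 2 * ‖P‖ ^ 2 + κ / 2 * ‖r‖ ^ 2 + μ / 2 * ‖p‖ ^ 2)

open Real Set
open scoped RealInnerProductSpace NNReal

namespace lp

variable {ι : Type*}

theorem hasSum_apply_sq (x : lp (fun _ : ι => ℝ) 2) : HasSum (fun i => x i ^ 2) (‖x‖ ^ 2) := by
  simpa [← real_inner_self_eq_norm_sq, sq] using lp.hasSum_inner (𝕜 := ℝ) x x

theorem norm_le_two_mul_of_abs_le {x y : lp (fun _ : ι => ℝ) 2} {a : ℝ} (ha : 0 ≤ a)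
    (e₁ e₂ : ι ≃ ι) (h : ∀ i, |x i| ≤ a * (|y (e₁ i)| + |y (e₂ i)|)) :
    ‖x‖ ≤ 2 * a * ‖y‖ := by
  have hy₁ := (e₁.hasSum_iff (f := fun i => y i ^ 2)).2 (hasSum_apply_sq y)
  have hy₂ := (e₂.hasSum_iff (f := fun i => y i ^ 2)).2 (hasSum_apply_sq y)
  have hsq : ‖x‖ ^ 2 ≤ (2 * a * ‖y‖) ^ 2 := by
    have hsum := ((hy₁.mul_left (2 * a ^ 2)).add (hy₂.mul_left (2 * a ^ 2)))
    refine (hasSum_le (fun i => ?_) (hasSum_apply_sq x) hsum).trans_eq (by ring)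
    have hxi := pow_le_pow_left₀ (abs_nonneg _) (h i) 2
    rw [sq_abs] at hxi
    simp only [Function.comp_apply]
    nlinarith [sq_nonneg (a * (|y (e₁ i)| - |y (e₂ i)|)), sq_abs (y (e₁ i)), sq_abs (y (e₂ i))]
  exact (pow_le_pow_iff_left₀ (norm_nonneg _) (by positivity) two_ne_zero).1 hsq

theorem apply_mem_Icc_of_norm_le {x : lp (fun _ : ι => ℝ) 2} {c : ℝ} (h : ‖x‖ ≤ c) (i : ι) :
    x i ∈ Icc (-c) c :=
  abs_le.1 ((norm_apply_le_norm two_ne_zero x i).trans h)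

end lp

/-- The barrier `(δ + ε t) e^{(K + 1) t}` grows strictly faster than `f` wherever the two touch
(this is what the `+ 1` is for), so `f` can never cross it. -/
theorem le_of_deriv_le_of_bootstrap {f : ℝ → ℝ} {T K ε δ : ℝ} (hK : 0 ≤ K) (hε : 0 ≤ ε)
    (hδ : 0 < δ) (h0 : f 0 ≤ δ)
    (hf : ∀ t ∈ Icc 0 T, ∃ f', HasDerivAt f f' t ∧
      (f t ≤ (δ + ε * T) * exp ((K + 1) * T) → f' ≤ K * f t + ε)) :
    ∀ t ∈ Icc 0 T, f t ≤ (δ + ε * T) * exp ((K + 1) * T) := by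
  choose! f' hf' hbound using hf
  set β : ℝ → ℝ := fun t => (δ + ε * t) * exp ((K + 1) * t)
  have hβ : ∀ t, HasDerivAt β
      (ε * exp ((K + 1) * t) + (δ + ε * t) * ((K + 1) * exp ((K + 1) * t))) t := by
    intro t
    have h1 := ((hasDerivAt_id' t).const_mul ε).const_add δ
    have h2 := ((hasDerivAt_id' t).const_mul (K + 1)).exp
    exact (h1.mul h2).congr_deriv (by ring)
  have hβpos : ∀ t, 0 ≤ t → 0 < β t := fun t ht => by positivity
  have hβmono : ∀ t ∈ Icc 0 T, β t ≤ β T := fun t ht =>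
    mul_le_mul (by nlinarith [ht.2]) (exp_le_exp.2 (by nlinarith [ht.2])) (by positivity)
      (by nlinarith [mul_nonneg hε (ht.1.trans ht.2)])
  have hbarrier : ∀ t ∈ Icc 0 T, f t ≤ β t := by
    refine image_le_of_deriv_right_lt_deriv_boundary
      (fun t ht => (hf' t ht).continuousAt.continuousWithinAt)
      (fun t ht => (hf' t ⟨ht.1, ht.2.le⟩).hasDerivWithinAt) (by simpa [β] using h0) hβ ?_
    intro t ht hft
    have ht' : t ∈ Icc 0 T := ⟨ht.1, ht.2.le⟩
    have h1 : 1 ≤ exp ((K + 1) * t) := one_le_exp (by nlinarith [ht.1])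
    have h2 := hbound t ht' (hft.trans_le (hβmono t ht'))
    have h3 := hβpos t ht.1
    rw [hft] at h2
    simp only [β] at h2 h3 ⊢
    nlinarith
  exact fun t ht => (hbarrier t ht).trans (hβmono t ht)

theorem le_of_abs_deriv_le_of_bootstrap {f : ℝ → ℝ} {T K ε δ : ℝ} (hK : 0 ≤ K) (hε : 0 ≤ ε)
    (hδ : 0 < δ) (h0 : f 0 ≤ δ)
    (hf : ∀ t ∈ Icc (-T) T, ∃ f', HasDerivAt f f' t ∧
      (f t ≤ (δ + ε * T) * exp ((K + 1) * T) → |f'| ≤ K * f t + ε)) :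
    ∀ t ∈ Icc (-T) T, f t ≤ (δ + ε * T) * exp ((K + 1) * T) := by
  intro t ht
  rcases le_total 0 t with h | h
  · refine le_of_deriv_le_of_bootstrap hK hε hδ h0 (fun s hs => ?_) t ⟨h, ht.2⟩
    obtain ⟨f', hd, hb⟩ := hf s ⟨by linarith [hs.1, hs.2], hs.2⟩
    exact ⟨f', hd, fun hs' => (le_abs_self f').trans (hb hs')⟩
  · have := le_of_deriv_le_of_bootstrap (f := fun s => f (-s)) (T := T) hK hε hδ (by simpa using h0)
      (fun s hs => ?_) (-t) ⟨neg_nonneg.2 h, by linarith [ht.1]⟩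
    · simpa using this
    obtain ⟨f', hd, hb⟩ := hf (-s) ⟨by linarith [hs.2], by linarith [hs.1, hs.2]⟩
    exact ⟨-f', (hd.comp s (hasDerivAt_neg s)).congr_deriv (by ring),
      fun hs' => (neg_le_abs f').trans (hb hs')⟩

theorem HasDerivAt.half_mul_norm_sq {E : Type*} [NormedAddCommGroup E] [InnerProductSpace ℝ E]
    {F : ℝ → E} {F' : E} {t : ℝ} (a : ℝ) (h : HasDerivAt F F' t) :
    HasDerivAt (fun u => a / 2 * ‖F u‖ ^ 2) (a * ⟪F t, F'⟫) t :=
  (h.norm_sq.const_mul (a / 2)).congr_deriv (by ring)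

theorem norm_le_two_mul_of_fwdDiff {x y : L2Z} (h : ∀ j, x j = y (j + 1) - y j) :
    ‖x‖ ≤ 2 * ‖y‖ := by
  simpa using lp.norm_le_two_mul_of_abs_le zero_le_one (Equiv.addRight 1) (Equiv.refl ℤ)
    (y := y) fun j => by simpa [h j] using abs_sub _ _

theorem norm_le_of_bwdDiff_lipschitzOnWith {F : ℝ → ℝ} {L : ℝ≥0} {s : Set ℝ}
    (hF : LipschitzOnWith L F s) {x a b : L2Z} (ha : ∀ j, a j ∈ s) (hb : ∀ j, b j ∈ s)
    (h : ∀ j, x j = (F (a j) - F (b j)) - (F (a (j - 1)) - F (b (j - 1)))) :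
    ‖x‖ ≤ 2 * L * ‖a - b‖ := by
  have hlip : ∀ j, |F (a j) - F (b j)| ≤ L * |(a - b) j| := fun j => by
    simpa [Real.dist_eq] using hF.dist_le_mul _ (ha j) _ (hb j)
  refine lp.norm_le_two_mul_of_abs_le L.2 (Equiv.refl ℤ) (Equiv.subRight 1) fun j => ?_
  rw [h j, mul_add]
  exact (abs_sub _ _).trans (add_le_add (hlip j) (hlip (j - 1)))

theorem norm_le_of_bwdDiff_lipschitzOnWith_Icc {F : ℝ → ℝ} {L : ℝ≥0}
    (hF : LipschitzOnWith L F (Icc (-1) 1)) (hF0 : F 0 = 0) {x a : L2Z} (ha : ‖a‖ ≤ 1)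
    (h : ∀ j, x j = F (a j) - F (a (j - 1))) :
    ‖x‖ ≤ 2 * L * ‖a‖ := by
  simpa using norm_le_of_bwdDiff_lipschitzOnWith hF (lp.apply_mem_Icc_of_norm_le ha) (b := 0)
    (fun _ => by simp) (fun j => by simp [h j, hF0])

def munormSq (k κ μ : ℝ) (R P r p : L2Z) : ℝ :=
  k / 2 * ‖R‖ ^ 2 + 1 / 2 * ‖P‖ ^ 2 + κ / 2 * ‖r‖ ^ 2 + μ / 2 * ‖p‖ ^ 2

theorem munorm_eq_sqrt_munormSq (k κ μ : ℝ) (R P r p : L2Z) :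
    munorm k κ μ R P r p = √(munormSq k κ μ R P r p) :=
  rfl

section munormSq

variable {k κ μ : ℝ}

theorem half_mul_norm_sq_le_munormSq (hk : 0 ≤ k) (hκ : 0 ≤ κ) (hμ : 0 ≤ μ) (R P r p : L2Z) :
    k / 2 * ‖R‖ ^ 2 ≤ munormSq k κ μ R P r p ∧ 1 / 2 * ‖P‖ ^ 2 ≤ munormSq k κ μ R P r p ∧
      κ / 2 * ‖r‖ ^ 2 ≤ munormSq k κ μ R P r p := by
  have : 0 ≤ k / 2 * ‖R‖ ^ 2 ∧ 0 ≤ 1 / 2 * ‖P‖ ^ 2 ∧ 0 ≤ κ / 2 * ‖r‖ ^ 2 ∧ 0 ≤ μ / 2 * ‖p‖ ^ 2 :=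
    ⟨by positivity, by positivity, by positivity, by positivity⟩
  unfold munormSq
  refine ⟨?_, ?_, ?_⟩ <;> linarith

theorem munormSq_add_le (hk : 0 ≤ k) (hκ : 0 ≤ κ) (hμ : 0 ≤ μ) (R P r p v : L2Z) :
    munormSq k κ μ R (P + v) r p ≤ 2 * munormSq k κ μ R P r p + ‖v‖ ^ 2 := by
  have hPv : ‖P + v‖ ^ 2 ≤ 2 * ‖P‖ ^ 2 + 2 * ‖v‖ ^ 2 := by
    nlinarith [norm_add_le P v, norm_nonneg (P + v), sq_nonneg (‖P‖ - ‖v‖)]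
  have : 0 ≤ k / 2 * ‖R‖ ^ 2 ∧ 0 ≤ κ / 2 * ‖r‖ ^ 2 ∧ 0 ≤ μ / 2 * ‖p‖ ^ 2 :=
    ⟨by positivity, by positivity, by positivity⟩
  unfold munormSq
  linarith

end munormSq

theorem HasDerivAt.munormSq {k κ μ t : ℝ} {R P r p : ℝ → L2Z} {R' P' r' p' : L2Z}
    (hR : HasDerivAt R R' t) (hP : HasDerivAt P P' t) (hr : HasDerivAt r r' t)
    (hp : HasDerivAt p p' t) :
    HasDerivAt (fun u => munormSq k κ μ (R u) (P u) (r u) (p u))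
      (k * ⟪R t, R'⟫ + ⟪P t, P'⟫ + κ * ⟪r t, r'⟫ + μ * ⟪p t, p'⟫) t :=
  ((((hR.half_mul_norm_sq k).add (hP.half_mul_norm_sq 1)).add
    (hr.half_mul_norm_sq κ)).add (hp.half_mul_norm_sq μ)).congr_deriv (by ring)

theorem exists_fput_norm_le_half {V : ℝ → ℝ} {L : ℝ≥0}
    (hL : LipschitzOnWith L (deriv V) (Icc (-1) 1)) (hV1 : deriv V 0 = 0) (T : ℝ) :
    ∃ ρ > 0, ∀ Rt Pt : ℝ → L2Z, IsFPUTSolution V Rt Pt → ‖Rt 0‖ + ‖Pt 0‖ ≤ ρ →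
      ∀ t ∈ Icc (-T) T, ‖Rt t‖ ≤ 1 / 2 ∧ ‖Pt t‖ ≤ 1 / 2 := by
  set K : ℝ := 2 * (1 + L)
  set ρ := √(exp (-((K + 1) * T)) / 4)
  have hρ : (ρ ^ 2 / 2 + 0 * T) * exp ((K + 1) * T) = 1 / 8 := by
    rw [sq_sqrt (by positivity), zero_mul, add_zero, div_div, div_mul_eq_mul_div, ← exp_add]
    norm_num
  refine ⟨ρ, by positivity, fun Rt Pt hF h0 => ?_⟩
  set f : ℝ → ℝ := fun u => 1 / 2 * ‖Rt u‖ ^ 2 + 1 / 2 * ‖Pt u‖ ^ 2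
  have hbound : ∀ t ∈ Icc (-T) T, f t ≤ 1 / 8 := by
    rw [← hρ]
    refine le_of_abs_deriv_le_of_bootstrap (by positivity) le_rfl (by positivity) ?_ fun t _ => ?_
    · simp only [f]
      nlinarith [norm_nonneg (Rt 0), norm_nonneg (Pt 0),
        sq_sqrt (show 0 ≤ exp (-((K + 1) * T)) / 4 by positivity)]
    obtain ⟨R', P', hR, hP, hR', hP'⟩ := hF t
    refine ⟨1 * ⟪Rt t, R'⟫ + 1 * ⟪Pt t, P'⟫, (hR.half_mul_norm_sq 1).add (hP.half_mul_norm_sq 1),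
      fun hft => ?_⟩
    rw [hρ] at hft
    simp only [f] at hft
    have hRt : ‖Rt t‖ ≤ 1 := by nlinarith [norm_nonneg (Rt t), norm_nonneg (Pt t)]
    have hR'le : ‖R'‖ ≤ 2 * ‖Pt t‖ := norm_le_two_mul_of_fwdDiff hR'
    have hP'le : ‖P'‖ ≤ 2 * L * ‖Rt t‖ := norm_le_of_bwdDiff_lipschitzOnWith_Icc hL hV1 hRt hP'
    have h1 := abs_real_inner_le_norm (Rt t) R'
    have h2 := abs_real_inner_le_norm (Pt t) P'
    calc |1 * ⟪Rt t, R'⟫ + 1 * ⟪Pt t, P'⟫| ≤ ‖Rt t‖ * ‖R'‖ + ‖Pt t‖ * ‖P'‖ := by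
          simpa only [one_mul] using (abs_add_le _ _).trans (add_le_add h1 h2)
      _ ≤ ‖Rt t‖ * (2 * ‖Pt t‖) + ‖Pt t‖ * (2 * L * ‖Rt t‖) := by gcongr
      _ ≤ K * f t + 0 := by
          simp only [K, f]
          nlinarith [sq_nonneg (‖Rt t‖ - ‖Pt t‖), L.2]
  intro t ht
  have := hbound t ht
  simp only [f] at this
  constructor <;> nlinarith [norm_nonneg (Rt t), norm_nonneg (Pt t)]

theorem exists_sho_norm_le {V : ℝ → ℝ} {L : ℝ≥0}
    (hL : LipschitzOnWith L (deriv V) (Icc (-1) 1)) (hV1 : deriv V 0 = 0) {κ K : ℝ}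
    (hκ : 0 < κ) (hK : 0 < K) (T : ℝ) :
    ∃ M ≥ 0, ∀ μ ∈ Ioc 0 1, ∀ Rt Pt : ℝ → L2Z, IsFPUTSolution V Rt Pt →
      (∀ t ∈ Icc (-T) T, ‖Rt t‖ ≤ 1 / 2 ∧ ‖Pt t‖ ≤ 1 / 2) →
      ∀ rt pt : ℝ → L2Z, IsDrivenSHOSolution κ μ Pt rt pt →
        ‖rt 0‖ + √μ * ‖pt 0 - Pt 0‖ ≤ K * μ → ∀ t ∈ Icc (-T) T, ‖pt t‖ ≤ M := by
  set C := ((κ + 1) * K ^ 2 + L ^ 2 * T) * exp (2 * T)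
  refine ⟨√C + 1 / 2, by positivity, fun μ ⟨hμ0, hμ1⟩ Rt Pt hF hFb rt pt hS h0 t ht => ?_⟩
  set f : ℝ → ℝ := fun u => κ / 2 * ‖rt u‖ ^ 2 + μ / 2 * ‖pt u - Pt u‖ ^ 2
  have hbound : f t ≤ ((κ + 1) * K ^ 2 * μ ^ 2 / 2 + L ^ 2 * μ / 2 * T) * exp ((1 + 1) * T) := by
    refine le_of_abs_deriv_le_of_bootstrap zero_le_one (by positivity) (by positivity) ?_
      (fun s hs => ?_) t ht
    · have hr0 : ‖rt 0‖ ≤ K * μ := by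
        linarith [mul_nonneg (sqrt_nonneg μ) (norm_nonneg (pt 0 - Pt 0))]
      have hp0 : √μ * ‖pt 0 - Pt 0‖ ≤ K * μ := by linarith [norm_nonneg (rt 0)]
      have hp0' := pow_le_pow_left₀ (by positivity) hp0 2
      rw [mul_pow, sq_sqrt hμ0.le] at hp0'
      simp only [f]
      nlinarith [pow_le_pow_left₀ (norm_nonneg _) hr0 2]
    obtain ⟨R', P', -, hP, -, hP'⟩ := hF s
    obtain ⟨r', p', hr, hp, hr', hp'⟩ := hS s
    have hr'' : r' = pt s - Pt s := by ext j; simp [hr' j]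
    have hp'' : μ • p' = (-κ) • rt s := by
      ext j
      simp only [lp.coeFn_smul, Pi.smul_apply, smul_eq_mul, hp' j]
      ring
    refine ⟨-(μ * ⟪pt s - Pt s, P'⟫), ((hr.half_mul_norm_sq κ).add
      ((hp.sub hP).half_mul_norm_sq μ)).congr_deriv ?_, fun _ => ?_⟩
    · have hμp' : μ * ⟪pt s - Pt s, p'⟫ = -(κ * ⟪rt s, pt s - Pt s⟫) := by
        rw [← inner_smul_right, hp'', inner_smul_right, real_inner_comm]
        ring
      rw [hr'', Pi.sub_apply, inner_sub_right (pt s - Pt s) p' P']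
      linear_combination hμp'
    have hRt : ‖Rt s‖ ≤ 1 / 2 := (hFb s hs).1
    have hP'le : ‖P'‖ ≤ L := by
      have := norm_le_of_bwdDiff_lipschitzOnWith_Icc hL hV1 (hRt.trans (by norm_num)) hP'
      nlinarith [L.2]
    have hinner := abs_real_inner_le_norm (pt s - Pt s) P'
    rw [abs_neg, abs_mul, abs_of_pos hμ0]
    simp only [f]
    nlinarith [mul_le_mul_of_nonneg_left (hinner.trans (mul_le_mul_of_nonneg_left hP'le
      (norm_nonneg _))) hμ0.le, sq_nonneg (‖pt s - Pt s‖ - L), norm_nonneg (rt s)]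
  rw [one_add_one_eq_two] at hbound
  have hdiff : ‖pt t - Pt t‖ ^ 2 ≤ C := by
    have h1 : μ / 2 * ‖pt t - Pt t‖ ^ 2 ≤ μ / 2 * C := by
      refine le_trans ?_ (hbound.trans ?_)
      · simp only [f]; nlinarith [norm_nonneg (rt t)]
      · simp only [C]
        have hμ : μ ^ 2 ≤ μ := by nlinarith
        linarith [mul_nonneg (mul_nonneg (by positivity : 0 ≤ (κ + 1) * K ^ 2) (sub_nonneg.2 hμ))
          (exp_pos (2 * T)).le]
    exact le_of_mul_le_mul_left h1 (by positivity)
  calc ‖pt t‖ ≤ ‖pt t - Pt t‖ + ‖Pt t‖ := norm_le_norm_sub_add _ _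
    _ ≤ √C + 1 / 2 := add_le_add (by simpa using abs_le_sqrt hdiff) (hFb t ht).2

theorem exists_hasDerivAt_munormSq_error {V : ℝ → ℝ} {k κ μ : ℝ}
    {Rt Pt rt pt R P r p : ℝ → L2Z} (hF : IsFPUTSolution V Rt Pt)
    (hS : IsDrivenSHOSolution κ μ Pt rt pt) (hM : IsMiMSolution V κ μ R P r p) (t : ℝ) :
    ∃ S' D : L2Z, (∀ j, S' j = (P t - Pt t) (j + 1) - (P t - Pt t) j) ∧
      (∀ j, D j = (deriv V (R t j) - deriv V (Rt t j)) -
        (deriv V (R t (j - 1)) - deriv V (Rt t (j - 1)))) ∧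
      HasDerivAt
        (fun u => munormSq k κ μ (R u - Rt u) (P u - Pt u + μ • pt u) (r u - rt u) (p u - pt u))
        (k * ⟪R t - Rt t, S'⟫ + ⟪P t - Pt t + μ • pt t, D⟫ + κ * μ * ⟪r t - rt t, pt t⟫) t := by
  obtain ⟨R', P', r', p', hR, hP, hr, hp, eR, eP, er, ep⟩ := hM t
  obtain ⟨R₀', P₀', hR₀, hP₀, eR₀, eP₀⟩ := hF t
  obtain ⟨r₀', p₀', hr₀, hp₀, er₀, ep₀⟩ := hS t
  set D := P' - P₀' + μ • p₀' - κ • (r t - rt t) with hD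
  refine ⟨R' - R₀', D, fun j => ?_, fun j => ?_, ?_⟩
  · simp only [lp.coeFn_sub, Pi.sub_apply, eR j, eR₀ j]
    ring
  · simp only [hD, lp.coeFn_sub, lp.coeFn_add, lp.coeFn_smul, Pi.sub_apply, Pi.add_apply,
      Pi.smul_apply, smul_eq_mul, eP j, eP₀ j]
    linear_combination ep₀ j
  have hs' : r' - r₀' = (p t - pt t) - (P t - Pt t) := by
    ext j
    simp only [lp.coeFn_sub, Pi.sub_apply, er j, er₀ j]
    ring
  have hq' : μ • (p' - p₀') = (-κ) • (r t - rt t) := by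
    ext j
    simp only [lp.coeFn_sub, lp.coeFn_smul, Pi.sub_apply, Pi.smul_apply, smul_eq_mul]
    linear_combination ep j - ep₀ j
  have hW' : P' - P₀' + μ • p₀' = D + κ • (r t - rt t) := by
    rw [hD, sub_add_cancel]
  refine ((hR.sub hR₀).munormSq ((hP.sub hP₀).add (hp₀.const_smul μ)) (hr.sub hr₀)
    (hp.sub hp₀)).congr_deriv ?_
  have hq : μ * ⟪p t - pt t, p' - p₀'⟫ = -κ * ⟪r t - rt t, p t - pt t⟫ := by
    rw [← inner_smul_right, hq', inner_smul_right, real_inner_comm]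
  have hW : ⟪P t - Pt t + μ • pt t, r t - rt t⟫ =
      ⟪r t - rt t, P t - Pt t⟫ + μ * ⟪r t - rt t, pt t⟫ := by
    rw [inner_add_left, real_inner_smul_left, real_inner_comm, real_inner_comm (pt t)]
  simp only [Pi.sub_apply, Pi.add_apply, Pi.smul_apply]
  rw [hW', hs', inner_add_right, inner_smul_right, inner_sub_right (r t - rt t), hq, hW]
  ring

theorem abs_deriv_munormSq_error_le {F : ℝ → ℝ} {L : ℝ≥0}
    (hF : LipschitzOnWith L F (Icc (-1) 1)) {k κ μ M : ℝ} (hk : 0 < k) (hκ : 0 < κ)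
    (hμ : 0 ≤ μ) {R Rt Q s q pt S' D : L2Z} (hRt : ‖Rt‖ ≤ 1 / 2) (hR : ‖R - Rt‖ ≤ 1 / 2)
    (hpt : ‖pt‖ ≤ M) (hS' : ∀ j, S' j = Q (j + 1) - Q j)
    (hD : ∀ j, D j = (F (R j) - F (Rt j)) - (F (R (j - 1)) - F (Rt (j - 1)))) :
    |k * ⟪R - Rt, S'⟫ + ⟪Q + μ • pt, D⟫ + κ * μ * ⟪s, pt⟫| ≤
      (2 * (k + L) * (1 + 1 / k) + 3 * M) * munormSq k κ μ (R - Rt) (Q + μ • pt) s q +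
        (k + κ / 2) * M * μ ^ 2 := by
  have hM : 0 ≤ M := (norm_nonneg pt).trans hpt
  obtain ⟨hxG, hyG, hzG⟩ := half_mul_norm_sq_le_munormSq hk.le hκ.le hμ (R - Rt) (Q + μ • pt) s q
  set G := munormSq k κ μ (R - Rt) (Q + μ • pt) s q
  set x := ‖R - Rt‖
  set y := ‖Q + μ • pt‖
  set z := ‖s‖
  have hRmem : ∀ j, R j ∈ Icc (-1) 1 := by
    refine lp.apply_mem_Icc_of_norm_le ?_
    calc ‖R‖ = ‖(R - Rt) + Rt‖ := by rw [sub_add_cancel]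
      _ ≤ x + ‖Rt‖ := norm_add_le _ _
      _ ≤ 1 := by linarith
  have hD' : ‖D‖ ≤ 2 * L * x :=
    norm_le_of_bwdDiff_lipschitzOnWith hF hRmem
      (lp.apply_mem_Icc_of_norm_le (hRt.trans (by norm_num))) hD
  have hQ : ‖Q‖ ≤ y + μ * M := by
    calc ‖Q‖ = ‖(Q + μ • pt) - μ • pt‖ := by rw [add_sub_cancel_right]
      _ ≤ y + ‖μ • pt‖ := norm_sub_le _ _
      _ ≤ y + μ * M := by rw [norm_smul, Real.norm_of_nonneg hμ]; gcongr
  have hS'' : ‖S'‖ ≤ 2 * (y + μ * M) := (norm_le_two_mul_of_fwdDiff hS').trans (by linarith)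
  have young₁ : 2 * (k + L) * x * y ≤ 2 * (k + L) * (1 + 1 / k) * G := by
    have hx2 : x ^ 2 ≤ 2 / k * G := by
      rw [div_mul_eq_mul_div, le_div_iff₀ hk]
      linarith
    have hkL : (0 : ℝ) ≤ k + L := by positivity
    calc 2 * (k + L) * x * y ≤ (k + L) * (x ^ 2 + y ^ 2) := by
          nlinarith [mul_nonneg hkL (sq_nonneg (x - y))]
      _ ≤ (k + L) * (2 / k * G + 2 * G) := by gcongr; linarith
      _ = 2 * (k + L) * (1 + 1 / k) * G := by ring
  have young₂ : 2 * k * μ * M * x ≤ k * M * μ ^ 2 + 2 * M * G := by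
    nlinarith [mul_nonneg (mul_nonneg hk.le hM) (sq_nonneg (μ - x)),
      mul_le_mul_of_nonneg_left hxG hM]
  have young₃ : κ * μ * M * z ≤ κ * M / 2 * μ ^ 2 + M * G := by
    nlinarith [mul_nonneg (mul_nonneg hκ.le hM) (sq_nonneg (μ - z)),
      mul_le_mul_of_nonneg_left hzG hM]
  calc _ ≤ |k * ⟪R - Rt, S'⟫| + |⟪Q + μ • pt, D⟫| + |κ * μ * ⟪s, pt⟫| := abs_add_three _ _ _
    _ ≤ k * (x * ‖S'‖) + y * ‖D‖ + κ * μ * (z * ‖pt‖) := by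
        rw [abs_mul, abs_mul, abs_of_pos hk, abs_of_nonneg (by positivity : 0 ≤ κ * μ)]
        gcongr <;> exact abs_real_inner_le_norm _ _
    _ ≤ k * (x * (2 * (y + μ * M))) + y * (2 * L * x) + κ * μ * (z * M) := by gcongr
    _ ≤ _ := by linarith

theorem exists_munorm_error_le {V : ℝ → ℝ} {L : ℝ≥0}
    (hL : LipschitzOnWith L (deriv V) (Icc (-1) 1)) {k κ M T : ℝ} (hk : 0 < k) (hκ : 0 < κ)
    (hM : 0 ≤ M) (hT : 0 ≤ T) :
    ∃ μ₀ > 0, ∃ C > 0, ∀ μ ∈ Ioc 0 μ₀, ∀ Rt Pt rt pt R P r p : ℝ → L2Z,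
      IsFPUTSolution V Rt Pt → IsDrivenSHOSolution κ μ Pt rt pt → IsMiMSolution V κ μ R P r p →
      (∀ t ∈ Icc (-T) T, ‖Rt t‖ ≤ 1 / 2 ∧ ‖pt t‖ ≤ M) →
      munorm k κ μ (R 0 - Rt 0) (P 0 - Pt 0) (r 0 - rt 0) (p 0 - pt 0) ≤ μ →
      ∀ t ∈ Icc (-T) T,
        munorm k κ μ (R t - Rt t) (P t - Pt t) (r t - rt t) (p t - pt t) ≤ C * μ := by
  set K₁ := 2 * (k + L) * (1 + 1 / k) + 3 * M
  set ε₁ := (k + κ / 2) * M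
  set c := (2 + M ^ 2 + ε₁ * T) * exp ((K₁ + 1) * T)
  have hc : 0 < c := by positivity
  -- `μ₀` is chosen so that the bootstrap bound `G ≤ c μ²` forces `‖R − R̃‖ ≤ 1/2`.
  refine ⟨√(k / (8 * c)), by positivity, √(2 * c + M ^ 2), by positivity, ?_⟩
  intro μ ⟨hμ0, hμ⟩ Rt Pt rt pt R P r p hF hS hMiM hbd h0
  have hcμ : c * μ ^ 2 ≤ k / 8 := by
    calc c * μ ^ 2 ≤ c * (k / (8 * c)) := by
          gcongr; exact (le_sqrt hμ0.le (by positivity)).1 hμ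
      _ = k / 8 := by field_simp
  set E := fun u => munormSq k κ μ (R u - Rt u) (P u - Pt u) (r u - rt u) (p u - pt u)
  set G := fun u =>
    munormSq k κ μ (R u - Rt u) (P u - Pt u + μ • pt u) (r u - rt u) (p u - pt u)
  have hμpt : ∀ u ∈ Icc (-T) T, ‖μ • pt u‖ ^ 2 ≤ μ ^ 2 * M ^ 2 := fun u hu => by
    rw [norm_smul, Real.norm_of_nonneg hμ0.le, mul_pow]
    gcongr
    exact (hbd u hu).2
  have hEG : ∀ u ∈ Icc (-T) T, E u ≤ 2 * G u + μ ^ 2 * M ^ 2 := fun u hu => by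
    have := munormSq_add_le hk.le hκ.le hμ0.le (R u - Rt u) (P u - Pt u + μ • pt u)
      (r u - rt u) (p u - pt u) (-(μ • pt u))
    rw [add_neg_cancel_right, norm_neg] at this
    exact this.trans (by linarith [hμpt u hu])
  have h0T : (0 : ℝ) ∈ Icc (-T) T := ⟨by linarith, hT⟩
  have hG : ∀ u ∈ Icc (-T) T, G u ≤ c * μ ^ 2 := by
    have hA : ((2 + M ^ 2) * μ ^ 2 + ε₁ * μ ^ 2 * T) * exp ((K₁ + 1) * T) = c * μ ^ 2 := by ring
    rw [← hA]
    refine le_of_abs_deriv_le_of_bootstrap (by positivity) (by positivity) (by positivity) ?_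
      fun s hs => ?_
    · have hE0 : E 0 ≤ μ ^ 2 := (sqrt_le_left hμ0.le).1 h0
      have := munormSq_add_le hk.le hκ.le hμ0.le (R 0 - Rt 0) (P 0 - Pt 0) (r 0 - rt 0)
        (p 0 - pt 0) (μ • pt 0)
      linarith [hμpt 0 h0T]
    obtain ⟨S', D, hS', hD, hderiv⟩ := exists_hasDerivAt_munormSq_error (k := k) hF hS hMiM s
    refine ⟨_, hderiv, fun hGs => ?_⟩
    have hRs : ‖R s - Rt s‖ ≤ 1 / 2 := by
      have hx : k / 2 * ‖R s - Rt s‖ ^ 2 ≤ G s := (half_mul_norm_sq_le_munormSq hk.le hκ.le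
        hμ0.le (R s - Rt s) (P s - Pt s + μ • pt s) (r s - rt s) (p s - pt s)).1
      rw [hA] at hGs
      have hsq : ‖R s - Rt s‖ ^ 2 ≤ (1 / 2) ^ 2 := by nlinarith
      exact (pow_le_pow_iff_left₀ (norm_nonneg _) (by norm_num) two_ne_zero).1 hsq
    exact abs_deriv_munormSq_error_le hL hk hκ hμ0.le (hbd s hs).1 hRs (hbd s hs).2 hS' hD
  intro t ht
  rw [munorm_eq_sqrt_munormSq, sqrt_le_left (by positivity), mul_pow, sq_sqrt (by positivity)]
  linarith [hEG t ht, hG t ht]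

theorem fput_approximation_order_mu_general
    (V : ℝ → ℝ) (κ K T : ℝ) (hκ : 0 < κ) (hK : 0 < K) (hT : 0 < T)
    (hV : ContDiff ℝ (⊤ : ℕ∞) V) (hV1 : deriv V 0 = 0)
    (k : ℝ) (hk : 0 < k) :
    ∃ ρ > 0, ∃ μ_ > 0, ∃ C > 0, ∀ μ ∈ Set.Ioc 0 μ_,
      ∀ Rt Pt : ℝ → L2Z, IsFPUTSolution V Rt Pt → ‖Rt 0‖ + ‖Pt 0‖ ≤ ρ →
        ∀ rt pt : ℝ → L2Z, IsDrivenSHOSolution κ μ Pt rt pt →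
          ‖rt 0‖ + Real.sqrt μ * ‖pt 0 - Pt 0‖ ≤ K * μ →
          ∀ R P r p : ℝ → L2Z, IsMiMSolution V κ μ R P r p →
            munorm k κ μ (R 0 - Rt 0) (P 0 - Pt 0) (r 0 - rt 0) (p 0 - pt 0) ≤ μ →
            ∀ t ∈ Set.Icc (-T) T,
              munorm k κ μ (R t - Rt t) (P t - Pt t) (r t - rt t) (p t - pt t) ≤ C * μ := by
  obtain ⟨L, hL⟩ : ∃ L, LipschitzOnWith L (deriv V) (Icc (-1) 1) :=
    (hV.iterate_deriv 1).contDiffOn.exists_lipschitzOnWith (by simp) (convex_Icc _ _) isCompact_Icc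
  obtain ⟨ρ, hρ, hFPUT⟩ := exists_fput_norm_le_half hL hV1 T
  obtain ⟨M, hM, hSHO⟩ := exists_sho_norm_le hL hV1 hκ hK T
  obtain ⟨μ₀, hμ₀, C, hC, hError⟩ := exists_munorm_error_le hL hk hκ hM hT.le
  refine ⟨ρ, hρ, min μ₀ 1, lt_min hμ₀ one_pos, C, hC, fun μ ⟨hμ0, hμ⟩ Rt Pt hF hF0 rt pt hS hS0
    R P r p hMiM h0 => ?_⟩
  have hFb := hFPUT Rt Pt hF hF0
  have hpt := hSHO μ ⟨hμ0, hμ.trans (min_le_right _ _)⟩ Rt Pt hF hFb rt pt hS hS0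
  exact hError μ ⟨hμ0, hμ.trans (min_le_left _ _)⟩ Rt Pt rt pt R P r p hF hS hMiM
    (fun t ht => ⟨(hFb t ht).1, hpt t ht⟩) h0

/-- Corollary 2: the `O(μ)` FPUT approximation.  If `(R̃,P̃)` solves FPUT with small data,
`(r̃,p̃)` solves the driven harmonic oscillator `ṙ̃ = p̃ − P̃`, `μṗ̃ = −κr̃` with
`‖r̃(0)‖ + √μ‖p̃(0) − P̃(0)‖ ≤ K_*μ`, and `(R,P,r,p)` solves MiM with initial data `μ`-close
to `(R̃(0),P̃(0),r̃(0),p̃(0))` in `‖·‖_μ`, then the two stay `C_*μ`-close on `[−T_*,T_*]`. -/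
theorem fput_approximation_order_mu
    (V : ℝ → ℝ) (κ K T : ℝ) (hκ : 0 < κ) (hK : 0 < K) (hT : 0 < T)
    (hV : ContDiff ℝ (⊤ : ℕ∞) V) (hV0 : V 0 = 0) (hV1 : deriv V 0 = 0)
    (k : ℝ) (hkdef : k = deriv (deriv V) 0) (hk : 0 < k) :
    ∃ ρ > 0, ∃ μ_ > 0, ∃ C > 0, ∀ μ ∈ Set.Ioc 0 μ_,
      ∀ Rt Pt : ℝ → L2Z, IsFPUTSolution V Rt Pt → ‖Rt 0‖ + ‖Pt 0‖ ≤ ρ →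
        ∀ rt pt : ℝ → L2Z, IsDrivenSHOSolution κ μ Pt rt pt →
          ‖rt 0‖ + Real.sqrt μ * ‖pt 0 - Pt 0‖ ≤ K * μ →
          ∀ R P r p : ℝ → L2Z, IsMiMSolution V κ μ R P r p →
            munorm k κ μ (R 0 - Rt 0) (P 0 - Pt 0) (r 0 - rt 0) (p 0 - pt 0) ≤ μ →
            ∀ t ∈ Set.Icc (-T) T,
              munorm k κ μ (R t - Rt t) (P t - Pt t) (r t - rt t) (p t - pt t) ≤ C * μ :=
  fput_approximation_order_mu_general V κ K T hκ hK hT hV hV1 k hk
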